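/- Let G be a finite simple graph with no isolated vertices, M = D⁻¹A, and fix K ≥ 1. Define the truncated shortest path distance SPD_{K−1}(i,j) = min(dist(i,j), K−1) when i,j are connected within distance K−1 and SPD_{K−1}(i,j) = K−1 otherwise. Then SPD_{K−1}(i,j) = Σ_{k=0}^{K−2} 1[(M^l)_{ij} = 0 for all l ≤ k], i.e., the truncated SPD equals the number of prefixes of the RRWP vector that are entirely zero. -/
import Mathlib


open Matrix Finset

noncomputable def rwMatrix (n : ℕ) (G : SimpleGraph (Fin n)) [DecidableRel G.Adj] :
    Matrix (Fin n) (Fin n) ℝ :=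
  (Matrix.diagonal fun i => (G.degree i : ℝ))⁻¹ * G.adjMatrix ℝ

lemma rwMatrix_apply (n : ℕ) (G : SimpleGraph (Fin n)) [DecidableRel G.Adj]
    (hdeg : ∀ v, 0 < G.degree v) (i j : Fin n) :
    rwMatrix n G i j = ((G.degree i : ℝ))⁻¹ * (G.adjMatrix ℝ) i j := by
  have hinv : (Matrix.diagonal fun i => (G.degree i : ℝ))⁻¹
      = Matrix.diagonal fun i => ((G.degree i : ℝ))⁻¹ := by
    apply Matrix.inv_eq_right_inv
    rw [Matrix.diagonal_mul_diagonal]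
    have : ∀ i : Fin n, (G.degree i : ℝ) * ((G.degree i : ℝ))⁻¹ = 1 := by
      intro i
      have := hdeg i
      field_simp
    simp only [this]
    exact Matrix.diagonal_one
  rw [rwMatrix, hinv, Matrix.diagonal_mul]

lemma rwMatrix_pow_key (n : ℕ) (G : SimpleGraph (Fin n)) [DecidableRel G.Adj]
    (hdeg : ∀ v, 0 < G.degree v) :
    ∀ (l : ℕ) (i j : Fin n),
      0 ≤ (rwMatrix n G ^ l) i j ∧
        ((rwMatrix n G ^ l) i j = 0 ↔ ((G.adjMatrix ℝ) ^ l) i j = 0) := by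
  intro l
  induction l with
  | zero =>
    intro i j
    constructor
    · rw [pow_zero, Matrix.one_apply]
      split <;> norm_num
    · simp
  | succ l ih =>
    intro i j
    have hM : ∀ a b : Fin n, 0 ≤ rwMatrix n G a b := by
      intro a b
      rw [rwMatrix_apply n G hdeg, SimpleGraph.adjMatrix_apply]
      split
      · positivity
      · simp
    have hMz : ∀ a b : Fin n, rwMatrix n G a b = 0 ↔ (G.adjMatrix ℝ) a b = 0 := by
      intro a b
      rw [rwMatrix_apply n G hdeg]
      have : ((G.degree a : ℝ))⁻¹ ≠ 0 := by
        have := hdeg a; positivity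
      constructor
      · intro h
        rcases mul_eq_zero.mp h with h' | h'
        · exact absurd h' this
        · exact h'
      · intro h; rw [h, mul_zero]
    have hA : ∀ a b : Fin n, 0 ≤ (G.adjMatrix ℝ) a b := by
      intro a b; simp [SimpleGraph.adjMatrix]; positivity
    have hAp : ∀ a b : Fin n, 0 ≤ ((G.adjMatrix ℝ) ^ l) a b := by
      intro a b
      rw [SimpleGraph.adjMatrix_pow_apply_eq_card_walk]
      positivity
    rw [pow_succ', pow_succ', Matrix.mul_apply, Matrix.mul_apply]
    constructor
    · exact Finset.sum_nonneg fun x _ => mul_nonneg (hM i x) ((ih x j).1)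
    · rw [Finset.sum_eq_zero_iff_of_nonneg
        (fun x _ => mul_nonneg (hM i x) ((ih x j).1)),
        Finset.sum_eq_zero_iff_of_nonneg
        (fun x _ => mul_nonneg (hA i x) (hAp x j))]
      constructor
      · intro h x hx
        rcases mul_eq_zero.mp (h x hx) with h' | h'
        · rw [(hMz i x).mp h', zero_mul]
        · rw [(ih x j).2.mp h', mul_zero]
      · intro h x hx
        rcases mul_eq_zero.mp (h x hx) with h' | h'
        · rw [(hMz i x).mpr h', zero_mul]
        · rw [(ih x j).2.mpr h', mul_zero]

open Classical in
lemma rwMatrix_pow_zero_iff (n : ℕ) (G : SimpleGraph (Fin n)) [DecidableRel G.Adj]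
    (hdeg : ∀ v, 0 < G.degree v) (l : ℕ) (i j : Fin n) :
    (rwMatrix n G ^ l) i j = 0 ↔ ∀ p : G.Walk i j, p.length ≠ l := by
  rw [(rwMatrix_pow_key n G hdeg l i j).2,
    SimpleGraph.adjMatrix_pow_apply_eq_card_walk]
  rw [Nat.cast_eq_zero, Fintype.card_eq_zero_iff]
  constructor
  · intro h p hp
    exact h.false ⟨p, hp⟩
  · intro h
    exact ⟨fun p => h p.1 p.2⟩

open Classical in
theorem truncated_spd_eq_sum_zero_prefix_indicators (n : ℕ) (G : SimpleGraph (Fin n))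
    [DecidableRel G.Adj] (hdeg : ∀ v, 0 < G.degree v) (K : ℕ) (hK : 1 ≤ K)
    (i j : Fin n) :
    (if G.Reachable i j then min (G.dist i j) (K - 1) else K - 1) =
      ∑ k ∈ Finset.range (K - 1),
        if ∀ l ≤ k, (rwMatrix n G ^ l) i j = 0 then 1 else 0 := by
  have hcond : ∀ k : ℕ, (∀ l ≤ k, (rwMatrix n G ^ l) i j = 0) ↔
      ¬(G.Reachable i j ∧ G.dist i j ≤ k) := by
    intro k
    constructor
    · rintro h ⟨hr, hd⟩
      obtain ⟨p, hp⟩ := hr.exists_walk_length_eq_dist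
      exact (rwMatrix_pow_zero_iff n G hdeg (G.dist i j) i j).mp
        (h (G.dist i j) hd) p hp
    · intro h l hl
      rw [rwMatrix_pow_zero_iff n G hdeg]
      intro p hp
      exact h ⟨p.reachable, le_trans (hp ▸ SimpleGraph.dist_le p) hl⟩
  have hsum : ∀ d : ℕ, ∑ k ∈ Finset.range (K - 1), (if k < d then 1 else 0)
      = min d (K - 1) := by
    intro d
    have hfil : Finset.filter (fun k => k < d) (Finset.range (K - 1))
        = Finset.range (min d (K - 1)) := by
      ext x; simp; omega
    rw [Finset.sum_boole, hfil, Finset.card_range, Nat.cast_id]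
  by_cases hr : G.Reachable i j
  · simp only [hr, if_true]
    rw [← hsum (G.dist i j)]
    apply Finset.sum_congr rfl
    intro k _
    by_cases hk : k < G.dist i j
    · rw [if_pos hk, if_pos ((hcond k).mpr (fun h => absurd h.2 (by omega)))]
    · rw [if_neg hk, if_neg (fun h => ((hcond k).mp h) ⟨hr, by omega⟩)]
  · simp only [hr, if_false]
    have : ∀ k ∈ Finset.range (K - 1),
        (if ∀ l ≤ k, (rwMatrix n G ^ l) i j = 0 then 1 else 0) = 1 := by
      intro k _
      rw [if_pos ((hcond k).mpr (fun h => hr h.1))]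
    rw [Finset.sum_congr rfl this, Finset.sum_const, Finset.card_range, smul_eq_mul,
      mul_one]
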